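/- arXiv:1904.03602 — 2 statements merged into one kernel-verified Lean document; each statement's English description precedes it below -/
import Mathlib

section
/- Let τ ≥ 8e and 0 < Z ≤ 1/e with ln(1/Z) ≤ τ/16. Then for every x with 0 ≤ x ≤ τ, the second derivative of g̃_{τ,Z} satisfies g̃″_{τ,Z}(x) ≤ (1/4)·g̃′_{τ,Z}(x). -/
/-- erf(x) = ∫₀ˣ exp(−s²/2) ds -/
noncomputable def erf (x : ℝ) : ℝ := ∫ s in (0:ℝ)..x, Real.exp (-s^2/2)

/-- g̃_{τ,Z}(x) = √(τ/8)·Z·erf(x/√(8τ))·exp(x²/(16τ)) -/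
noncomputable def gtilde (τ Z x : ℝ) : ℝ :=
  Real.sqrt (τ/8) * Z * erf (x / Real.sqrt (8*τ)) * Real.exp (x^2/(16*τ))

/-!
With `u = x / √(8τ)` one has `g̃ = (Z √(8τ) / 8) · F u` where `F u = erf u · exp (u²/2)` solves
`F' = 1 + u F`. Hence `g̃' = Z/8 + x g̃ / (8τ)` and `g̃'' = g̃ / (8τ) + x g̃' / (8τ)`. For `x ≤ τ`
the second term is at most `g̃'/8`, so it suffices that `g̃ ≤ τ g̃'`, i.e. `g̃ ≤ τZ/8 + x g̃/8`.
This is clear for `x ≥ 8`; for `x < 8`, `erf u ≤ u` gives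
`g̃ ≤ (Z x / 8) exp (x²/(16τ)) ≤ Z e ≤ τ Z / 8`.
-/

open Real

lemma hasDerivAt_erf (x : ℝ) : HasDerivAt erf (exp (-x^2/2)) x :=
  ((by fun_prop : Continuous fun s : ℝ => exp (-s^2/2)).integral_hasStrictDerivAt 0 x).hasDerivAt

lemma erf_nonneg {x : ℝ} (hx : 0 ≤ x) : 0 ≤ erf x :=
  intervalIntegral.integral_nonneg hx fun _ _ => (exp_pos _).le

lemma erf_le_self {x : ℝ} (hx : 0 ≤ x) : erf x ≤ x := by
  have h : erf x ≤ ∫ _ in (0:ℝ)..x, (1:ℝ) :=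
    intervalIntegral.integral_mono_on hx
      ((by fun_prop : Continuous fun s : ℝ => exp (-s^2/2)).intervalIntegrable _ _)
      intervalIntegrable_const
      fun s _ => exp_le_one_iff.2 (by nlinarith [sq_nonneg s])
  simpa using h

lemma hasDerivAt_erf_mul_exp (u : ℝ) :
    HasDerivAt (fun v => erf v * exp (v^2/2)) (1 + u * (erf u * exp (u^2/2))) u := by
  have hexp : HasDerivAt (fun v : ℝ => exp (v^2/2)) (exp (u^2/2) * u) u := by
    simpa using ((hasDerivAt_pow 2 u).div_const 2).exp
  refine ((hasDerivAt_erf u).mul hexp).congr_deriv ?_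
  rw [← exp_add, show -u^2/2 + u^2/2 = 0 by ring, exp_zero]
  ring

lemma div_sqrt_sq_div_two {τ : ℝ} (hτ : 0 ≤ τ) (x : ℝ) :
    (x / √(8*τ))^2/2 = x^2/(16*τ) := by
  rw [div_pow, sq_sqrt (by positivity)]
  ring

lemma gtilde_eq {τ : ℝ} (hτ : 0 ≤ τ) (Z x : ℝ) :
    gtilde τ Z x = Z * √(8*τ) / 8 * (erf (x / √(8*τ)) * exp ((x / √(8*τ))^2/2)) := by
  have hsqrt : √(τ/8) = √(8*τ) / 8 := by
    rw [show τ/8 = 8*τ/8^2 by ring, sqrt_div' _ (by positivity), sqrt_sq (by norm_num)]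
  rw [gtilde, hsqrt, div_sqrt_sq_div_two hτ]
  ring

lemma gtilde_nonneg {τ Z x : ℝ} (hZ : 0 ≤ Z) (hx : 0 ≤ x) : 0 ≤ gtilde τ Z x := by
  have := erf_nonneg (div_nonneg hx (sqrt_nonneg (8*τ)))
  unfold gtilde
  positivity

lemma hasDerivAt_gtilde {τ : ℝ} (hτ : 0 < τ) (Z x : ℝ) :
    HasDerivAt (gtilde τ Z) (Z/8 + x/(8*τ) * gtilde τ Z x) x := by
  have hc : √(8*τ) ≠ 0 := (sqrt_pos.2 (by positivity)).ne'
  have h := ((hasDerivAt_erf_mul_exp (x / √(8*τ))).comp x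
    ((hasDerivAt_id x).div_const √(8*τ))).const_mul (Z * √(8*τ) / 8)
  rw [gtilde_eq hτ.le Z x, funext (gtilde_eq hτ.le Z)]
  refine h.congr_deriv ?_
  have hc2 : √(8*τ)^2 = 8*τ := sq_sqrt (by positivity)
  generalize √(8*τ) = c at *
  obtain rfl : τ = c^2/8 := by linarith
  field_simp

lemma deriv_gtilde {τ : ℝ} (hτ : 0 < τ) (Z : ℝ) :
    deriv (gtilde τ Z) = fun x => Z/8 + x/(8*τ) * gtilde τ Z x :=
  funext fun x => (hasDerivAt_gtilde hτ Z x).deriv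

lemma hasDerivAt_deriv_gtilde {τ : ℝ} (hτ : 0 < τ) (Z x : ℝ) :
    HasDerivAt (deriv (gtilde τ Z))
      (gtilde τ Z x / (8*τ) + x/(8*τ) * deriv (gtilde τ Z) x) x := by
  rw [deriv_gtilde hτ]
  refine ((((hasDerivAt_id x).div_const (8*τ)).mul (hasDerivAt_gtilde hτ Z x)).const_add
    (Z/8)).congr_deriv ?_
  simp only [id]
  ring

lemma gtilde_le_mul_exp {τ Z x : ℝ} (hτ : 0 < τ) (hZ : 0 ≤ Z) (hx : 0 ≤ x) :
    gtilde τ Z x ≤ Z * x / 8 * exp (x^2/(16*τ)) := by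
  have hc : √(8*τ) ≠ 0 := (sqrt_pos.2 (by positivity)).ne'
  calc gtilde τ Z x
      ≤ Z * √(8*τ) / 8 * (x / √(8*τ) * exp ((x / √(8*τ))^2/2)) := by
        rw [gtilde_eq hτ.le]
        gcongr
        exact erf_le_self (div_nonneg hx (sqrt_nonneg _))
    _ = Z * x / 8 * exp (x^2/(16*τ)) := by
        rw [div_sqrt_sq_div_two hτ.le]
        field_simp

lemma gtilde_le_mul_deriv {τ Z x : ℝ} (hτ : 8 * exp 1 ≤ τ) (hZ : 0 ≤ Z) (hx : 0 ≤ x) :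
    gtilde τ Z x ≤ τ * deriv (gtilde τ Z) x := by
  have hτ0 : 0 < τ := lt_of_lt_of_le (by positivity) hτ
  have hg := gtilde_nonneg (τ := τ) hZ hx
  rw [(hasDerivAt_gtilde hτ0 Z x).deriv,
    show τ * (Z/8 + x/(8*τ) * gtilde τ Z x) = τ * Z / 8 + x / 8 * gtilde τ Z x by field_simp]
  rcases le_or_gt 8 x with h8 | h8
  · nlinarith
  · have hexp : exp (x^2/(16*τ)) ≤ exp 1 := by
      rw [exp_le_exp, div_le_one (by positivity)]
      nlinarith [add_one_le_exp 1]
    calc gtilde τ Z x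
        ≤ Z * x / 8 * exp (x^2/(16*τ)) := gtilde_le_mul_exp hτ0 hZ hx
      _ ≤ Z * exp 1 := mul_le_mul (by nlinarith) hexp (exp_pos _).le hZ
      _ ≤ τ * Z / 8 := by nlinarith
      _ ≤ τ * Z / 8 + x / 8 * gtilde τ Z x := le_add_of_nonneg_right (by positivity)

theorem stmt_5_general (τ Z : ℝ) (hτ : 8 * Real.exp 1 ≤ τ)
    (hZ : 0 < Z) :
    ∀ x : ℝ, 0 ≤ x → x ≤ τ →
      deriv (deriv (gtilde τ Z)) x ≤ (1/4) * deriv (gtilde τ Z) x := by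
  intro x hx hxτ
  have hτ0 : 0 < τ := lt_of_lt_of_le (by positivity) hτ
  rw [(hasDerivAt_deriv_gtilde hτ0 Z x).deriv]
  set d := deriv (gtilde τ Z) x
  have hd_nonneg : 0 ≤ d := by
    rw [show d = Z/8 + x/(8*τ) * gtilde τ Z x from (hasDerivAt_gtilde hτ0 Z x).deriv]
    have := gtilde_nonneg (τ := τ) hZ.le hx
    positivity
  have h_first : gtilde τ Z x / (8*τ) ≤ d / 8 :=
    calc gtilde τ Z x / (8*τ) ≤ τ * d / (8*τ) := by gcongr; exact gtilde_le_mul_deriv hτ hZ.le hx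
      _ = d / 8 := by field_simp
  have h_second : x/(8*τ) * d ≤ 1/8 * d := by
    refine mul_le_mul_of_nonneg_right ?_ hd_nonneg
    rw [div_le_div_iff₀ (by positivity) (by norm_num)]
    linarith
  linarith

theorem stmt_5 (τ Z : ℝ) (hτ : 8 * Real.exp 1 ≤ τ)
    (hZ : 0 < Z) (hZ1 : Z ≤ 1 / Real.exp 1)
    (hZτ : Real.log (1/Z) ≤ τ/16) :
    ∀ x : ℝ, 0 ≤ x → x ≤ τ →
      deriv (deriv (gtilde τ Z)) x ≤ (1/4) * deriv (gtilde τ Z) x :=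
  stmt_5_general τ Z hτ hZ
end

section
/- Let τ ≥ 8e and 0 < Z ≤ 1/e with ln(1/Z) ≤ τ/16, and let g = g_{τ,Z}. Then for every interval I ⊆ ℝ of length at most 2, every x ∈ I, and all s, s′ ∈ I, one has 4·|g(s) − g(s′)| ≤ ((1/τ)·x·g(x) + Z)·|s − s′|. -/
lemma erf_cont_integrand : Continuous (fun s : ℝ => Real.exp (-s^2/2)) := by
  continuity

lemma erf_hasDerivAt (x : ℝ) : HasDerivAt erf (Real.exp (-x^2/2)) x := by
  exact (intervalIntegral.integral_hasStrictDerivAt_right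
    (erf_cont_integrand.intervalIntegrable 0 x)
    (erf_cont_integrand.stronglyMeasurableAtFilter _ _)
    erf_cont_integrand.continuousAt).hasDerivAt

lemma erf_zero : erf 0 = 0 := by simp [erf]

lemma erf_continuous : Continuous erf :=
  continuous_iff_continuousAt.2 fun x => (erf_hasDerivAt x).continuousAt

lemma erf_mono : Monotone erf := by
  have h : ∀ x : ℝ, 0 ≤ deriv erf x := by
    intro x
    rw [(erf_hasDerivAt x).deriv]
    positivity
  exact monotone_of_deriv_nonneg (fun x => (erf_hasDerivAt x).differentiableAt) h

lemma erf_nonneg_s6 {a : ℝ} (ha : 0 ≤ a) : 0 ≤ erf a := by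
  have := erf_mono ha
  rwa [erf_zero] at this

lemma erf_add_int (a b : ℝ) : erf b = erf a + ∫ s in a..b, Real.exp (-s^2/2) := by
  rw [erf, erf, ← intervalIntegral.integral_add_adjacent_intervals
    (erf_cont_integrand.intervalIntegrable 0 a) (erf_cont_integrand.intervalIntegrable a b)]

lemma erf_sub_le {a b : ℝ} (h0 : 0 ≤ a) (hab : a ≤ b) :
    erf b ≤ erf a + (b - a) * Real.exp (-a^2/2) := by
  rw [erf_add_int a b]
  gcongr
  calc (∫ s in a..b, Real.exp (-s^2/2)) ≤ ∫ s in a..b, Real.exp (-a^2/2) := by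
        apply intervalIntegral.integral_mono_on hab
          (erf_cont_integrand.intervalIntegrable a b)
          intervalIntegrable_const
        intro s hs
        apply Real.exp_le_exp.2
        nlinarith [hs.1, hs.2]
    _ = (b - a) * Real.exp (-a^2/2) := by
        simp [smul_eq_mul]

lemma erf_le_self_s6 {a : ℝ} (ha : 0 ≤ a) : erf a ≤ a := by
  have h := erf_sub_le le_rfl ha
  simpa [erf_zero] using h

lemma erf_lb {a : ℝ} (ha : 0 ≤ a) : a - a^3/6 ≤ erf a := by
  have h : (∫ s in (0:ℝ)..a, (1 - s^2/2)) ≤ ∫ s in (0:ℝ)..a, Real.exp (-s^2/2) := by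
    apply intervalIntegral.integral_mono_on ha
      (by apply Continuous.intervalIntegrable; continuity)
      (erf_cont_integrand.intervalIntegrable 0 a)
    intro s _
    have := Real.add_one_le_exp (-s^2/2)
    linarith
  have h2 : (∫ s in (0:ℝ)..a, (1 - s^2/2)) = a - a^3/6 := by
    rw [intervalIntegral.integral_sub intervalIntegrable_const
      (by apply Continuous.intervalIntegrable; continuity)]
    rw [intervalIntegral.integral_div, integral_pow]
    simp
    ring
  rw [erf, ← h2]; exact h

lemma exp_neg_le_quad {y : ℝ} (hy : 0 ≤ y) : Real.exp (-y) ≤ 1 - y + y^2/2 := by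
  have h1 : 1 + y + y^2/2 ≤ Real.exp y := by
    have := Real.sum_le_exp_of_nonneg hy 3
    simp [Finset.sum_range_succ, Nat.factorial] at this
    linarith
  have h2 : Real.exp (-y) = 1 / Real.exp y := by
    rw [Real.exp_neg]; ring
  rw [h2]
  rw [div_le_iff₀ (Real.exp_pos y)]
  have hq : 0 ≤ 1 - y + y^2/2 := by nlinarith
  nlinarith [mul_le_mul_of_nonneg_left h1 hq]

lemma erf_ub5 {a : ℝ} (ha : 0 ≤ a) : erf a ≤ a - a^3/6 + a^5/40 := by
  have h : (∫ s in (0:ℝ)..a, Real.exp (-s^2/2)) ≤ ∫ s in (0:ℝ)..a, (1 - s^2/2 + (s^2/2)^2/2) := by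
    apply intervalIntegral.integral_mono_on ha
      (erf_cont_integrand.intervalIntegrable 0 a)
      (by apply Continuous.intervalIntegrable; continuity)
    intro s _
    have := exp_neg_le_quad (y := s^2/2) (by positivity)
    calc Real.exp (-s^2/2) = Real.exp (-(s^2/2)) := by ring_nf
      _ ≤ 1 - s^2/2 + (s^2/2)^2/2 := this
  have h2 : (∫ s in (0:ℝ)..a, (1 - s^2/2 + (s^2/2)^2/2)) = a - a^3/6 + a^5/40 := by
    have : ∀ s : ℝ, (1 - s^2/2 + (s^2/2)^2/2) = 1 - s^2/2 + s^4/8 := by intro s; ring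
    simp_rw [this]
    rw [intervalIntegral.integral_add (by apply Continuous.intervalIntegrable; continuity)
      (by apply Continuous.intervalIntegrable; continuity),
      intervalIntegral.integral_sub intervalIntegrable_const
      (by apply Continuous.intervalIntegrable; continuity)]
    rw [intervalIntegral.integral_div, intervalIntegral.integral_div, integral_pow, integral_pow]
    simp
    ring
  rw [erf]; linarith

lemma erf_one_lb : Real.exp (-1/2) ≤ erf 1 := by
  have h : (∫ s in (0:ℝ)..1, Real.exp (-1/2)) ≤ ∫ s in (0:ℝ)..1, Real.exp (-s^2/2) := by
    apply intervalIntegral.integral_mono_on zero_le_one intervalIntegrable_const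
      (erf_cont_integrand.intervalIntegrable 0 1)
    intro s hs
    apply Real.exp_le_exp.2
    nlinarith [hs.1, hs.2]
  simpa [erf] using h

noncomputable def psi (u : ℝ) : ℝ := u * erf u * Real.exp (u^2/2)

lemma psi_zero : psi 0 = 0 := by simp [psi]

lemma psi_nonneg {u : ℝ} (hu : 0 ≤ u) : 0 ≤ psi u := by
  have := erf_nonneg_s6 hu
  unfold psi
  positivity

lemma psi_mono {u v : ℝ} (hu : 0 ≤ u) (huv : u ≤ v) : psi u ≤ psi v := by
  unfold psi
  have h1 := erf_nonneg_s6 hu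
  have h2 := erf_mono huv
  have h3 : Real.exp (u^2/2) ≤ Real.exp (v^2/2) := by
    apply Real.exp_le_exp.2; nlinarith
  have h4 : (0:ℝ) < Real.exp (u^2/2) := Real.exp_pos _
  have h5 : u * erf u ≤ v * erf v :=
    mul_le_mul huv h2 h1 (le_trans hu huv)
  have h6 : 0 ≤ u * erf u := mul_nonneg hu h1
  exact mul_le_mul h5 h3 h4.le (mul_nonneg (le_trans hu huv) (h1.trans h2))

lemma exp_ub3 {x : ℝ} (hx : |x| ≤ 1) : Real.exp x ≤ 1 + x + x^2/2 + |x|^3 * (2/9) := by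
  have h := Real.exp_bound hx (n := 3) (by norm_num)
  have h2 : (∑ m ∈ Finset.range 3, x ^ m / m.factorial) = 1 + x + x^2/2 := by
    norm_num [Finset.sum_range_succ, Nat.factorial]
    try ring
  rw [h2] at h
  have h3 := (abs_sub_le_iff.1 h).1
  have h4 : (((3:ℕ).succ : ℝ) / (((3:ℕ).factorial : ℝ) * (3:ℕ)) : ℝ) = 2/9 := by
    norm_num [Nat.factorial]
  rw [h4] at h3
  linarith

lemma psi_le_one_of_le {u : ℝ} (hu0 : 0 ≤ u) (h : u ≤ 0.85) : psi u ≤ 1 := by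
  have h1 : psi u ≤ psi 0.85 := psi_mono hu0 h
  have h2 : erf 0.85 ≤ (0.85:ℝ) - 0.85^3/6 + 0.85^5/40 := erf_ub5 (by norm_num)
  have harg : ((0.85:ℝ)^2/2) = 0.36125 := by norm_num
  have h3 : Real.exp ((0.85:ℝ)^2/2) ≤ 1.437 := by
    rw [harg]
    have := exp_ub3 (x := (0.36125:ℝ)) (by rw [abs_of_nonneg]; norm_num; norm_num)
    rw [abs_of_nonneg (by norm_num)] at this
    norm_num at this
    linarith
  have h4 : (0:ℝ) ≤ erf 0.85 := erf_nonneg_s6 (by norm_num)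
  have h5 : (0:ℝ) < Real.exp ((0.85:ℝ)^2/2) := Real.exp_pos _
  have h6 : psi 0.85 ≤ 1 := by
    unfold psi
    nlinarith
  linarith

lemma psi_key {δ u v : ℝ} (hδ0 : 0 < δ) (hδ : δ ≤ 0.152) (hu0 : 0 ≤ u) (hv0 : 0 ≤ v)
    (huv : u ≤ v + δ) (hu4 : δ * u ≤ 1/4) : psi u ≤ 2 * psi v + 1 := by
  rcases le_total u 0.85 with h | h
  · have := psi_le_one_of_le hu0 h
    have := psi_nonneg hv0
    linarith
  · set w : ℝ := u - δ with hw_def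
    have hw698 : (0.698:ℝ) ≤ w := by simp only [hw_def]; linarith
    have hw0 : (0:ℝ) ≤ w := by linarith
    have hwu : w ≤ u := by simp only [hw_def]; linarith
    have hwv : w ≤ v := by simp only [hw_def]; linarith
    -- A : u ≤ 1.218 w
    have hA : u ≤ 1.218 * w := by nlinarith
    -- B : erf u ≤ 1.19 * erf w
    have hb1 : erf u ≤ erf w + δ * Real.exp (-w^2/2) := by
      have := erf_sub_le hw0 hwu
      have he : u - w = δ := by simp [hw_def]
      rw [he] at this
      exact this
    have hb2 : Real.exp (-w^2/2) ≤ Real.exp (-(0.698:ℝ)^2/2) := by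
      apply Real.exp_le_exp.2
      nlinarith
    have hb3 : Real.exp (-(0.698:ℝ)^2/2) ≤ 0.7893 := by
      have harg : (-(0.698:ℝ)^2/2) = -0.243602 := by norm_num
      rw [harg]
      have := exp_ub3 (x := (-0.243602:ℝ)) (by rw [abs_of_nonpos]; norm_num; norm_num)
      rw [abs_of_nonpos (by norm_num)] at this
      norm_num at this
      linarith
    have hb4 : (0.6413:ℝ) ≤ erf w := by
      have h1 : (0.698:ℝ) - 0.698^3/6 ≤ erf 0.698 := erf_lb (by norm_num)
      have h2 : erf 0.698 ≤ erf w := erf_mono hw698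
      norm_num at h1
      linarith
    have hB : erf u ≤ 1.19 * erf w := by nlinarith
    -- C : exp(u²/2) ≤ 1.285 exp(w²/2)
    have hc1 : u^2/2 - w^2/2 ≤ 1/4 := by nlinarith
    have hc2 : Real.exp (u^2/2) = Real.exp (u^2/2 - w^2/2) * Real.exp (w^2/2) := by
      rw [← Real.exp_add]; ring_nf
    have hc3 : Real.exp (u^2/2 - w^2/2) ≤ 1.285 := by
      have e1 : Real.exp (u^2/2 - w^2/2) ≤ Real.exp (1/4 : ℝ) := Real.exp_le_exp.2 hc1
      have e2 : Real.exp (1/4 : ℝ) ≤ 1.285 := by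
        have := exp_ub3 (x := (1/4:ℝ)) (by rw [abs_of_nonneg]; norm_num; norm_num)
        rw [abs_of_nonneg (by norm_num)] at this
        norm_num at this
        linarith
      linarith
    have hC : Real.exp (u^2/2) ≤ 1.285 * Real.exp (w^2/2) := by
      rw [hc2]
      have := Real.exp_pos (w^2/2)
      nlinarith
    -- combine
    have herfw : (0:ℝ) ≤ erf w := erf_nonneg_s6 hw0
    have herfu : (0:ℝ) ≤ erf u := erf_nonneg_s6 hu0
    have hexpw : (0:ℝ) < Real.exp (w^2/2) := Real.exp_pos _
    have hexpu : (0:ℝ) < Real.exp (u^2/2) := Real.exp_pos _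
    have hkey : psi u ≤ 2 * psi w := by
      unfold psi
      have hw' : (0:ℝ) ≤ 1.218 * w := by linarith
      have herfw' : (0:ℝ) ≤ 1.19 * erf w := by linarith
      have s1 : u * erf u ≤ (1.218 * w) * (1.19 * erf w) :=
        mul_le_mul hA hB herfu hw'
      have s2 : u * erf u * Real.exp (u^2/2) ≤
          ((1.218 * w) * (1.19 * erf w)) * (1.285 * Real.exp (w^2/2)) :=
        mul_le_mul s1 hC hexpu.le (mul_nonneg hw' herfw')
      have s3 : ((1.218 * w) * (1.19 * erf w)) * (1.285 * Real.exp (w^2/2)) =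
          1.8625047 * (w * erf w * Real.exp (w^2/2)) := by ring
      have s4 : (0:ℝ) ≤ w * erf w * Real.exp (w^2/2) :=
        mul_nonneg (mul_nonneg hw0 herfw) hexpw.le
      rw [s3] at s2
      linarith
    have := psi_mono hw0 hwv
    linarith

lemma hr_pos {τ : ℝ} (hτ0 : 0 < τ) : (0:ℝ) < Real.sqrt (8*τ) :=
  Real.sqrt_pos.2 (by linarith)

lemma hr_sq {τ : ℝ} (hτ0 : 0 < τ) : Real.sqrt (8*τ) ^ 2 = 8*τ :=
  Real.sq_sqrt (by linarith)

lemma hsr_mul {τ : ℝ} (hτ0 : 0 < τ) : Real.sqrt (τ/8) * Real.sqrt (8*τ) = τ := by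
  rw [← Real.sqrt_mul (by positivity)]
  have h : τ/8 * (8*τ) = τ^2 := by ring
  rw [h, Real.sqrt_sq hτ0.le]

lemma hsr_eq {τ : ℝ} (hτ0 : 0 < τ) : Real.sqrt (τ/8) = τ / Real.sqrt (8*τ) := by
  have h := hsr_mul hτ0
  have hr0 := hr_pos hτ0
  rw [eq_div_iff hr0.ne']
  exact h

lemma harg_eq {τ : ℝ} (hτ0 : 0 < τ) (x : ℝ) :
    (x / Real.sqrt (8*τ))^2/2 = x^2/(16*τ) := by
  rw [div_pow, hr_sq hτ0]
  ring

lemma gtilde_hasDerivAt {τ Z : ℝ} (hτ0 : 0 < τ) (x : ℝ) :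
    HasDerivAt (gtilde τ Z) (Z/8 * (1 + psi (x / Real.sqrt (8*τ)))) x := by
  set r := Real.sqrt (8*τ) with hr_def
  have hr0 : (0:ℝ) < r := hr_pos hτ0
  have hrr : r * r = 8 * τ := by
    have := hr_sq hτ0
    nlinarith
  have h1 : HasDerivAt (fun y : ℝ => erf (y/r)) (Real.exp (-(x/r)^2/2) * (1/r)) x := by
    have := (erf_hasDerivAt (x/r)).comp x ((hasDerivAt_id x).div_const r)
    exact this
  have h2 : HasDerivAt (fun y : ℝ => y^2/(16*τ)) (2*x/(16*τ)) x := by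
    have := (hasDerivAt_pow 2 x).div_const (16*τ)
    simpa using this
  have h3 : HasDerivAt (fun y : ℝ => Real.exp (y^2/(16*τ)))
      (Real.exp (x^2/(16*τ)) * (2*x/(16*τ))) x := h2.exp
  have h4 : HasDerivAt (fun y : ℝ => Real.sqrt (τ/8) * Z * erf (y/r))
      (Real.sqrt (τ/8) * Z * (Real.exp (-(x/r)^2/2) * (1/r))) x := h1.const_mul _
  have h5 := h4.mul h3
  have hE : Real.exp (-(x/r)^2/2) * Real.exp (x^2/(16*τ)) = 1 := by
    rw [← Real.exp_add]
    have h6 : -(x/r)^2/2 + x^2/(16*τ) = 0 := by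
      have := harg_eq hτ0 (x := x)
      rw [← hr_def] at this
      linarith
    rw [h6, Real.exp_zero]
  have hpsi : psi (x/r) = (x/r) * erf (x/r) * Real.exp (x^2/(16*τ)) := by
    unfold psi
    rw [hr_def, harg_eq hτ0]
  have hsr : Real.sqrt (τ/8) = τ / r := hsr_eq hτ0
  have key : τ/r * Z * (Real.exp (-(x/r)^2/2) * (1/r)) * Real.exp (x^2/(16*τ)) = Z/8 := by
    have e1 : τ/r * Z * (Real.exp (-(x/r)^2/2) * (1/r)) * Real.exp (x^2/(16*τ))
        = Z * τ / (r*r) * (Real.exp (-(x/r)^2/2) * Real.exp (x^2/(16*τ))) := by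
      field_simp
    rw [e1, hE, hrr, mul_one]
    field_simp [hτ0.ne']
  have key2 : τ/r * Z * erf (x/r) * (Real.exp (x^2/(16*τ)) * (2*x/(16*τ)))
      = Z/8 * ((x/r) * erf (x/r) * Real.exp (x^2/(16*τ))) := by
    field_simp
    ring
  have heq : Real.sqrt (τ/8) * Z * (Real.exp (-(x/r)^2/2) * (1/r)) * Real.exp (x^2/(16*τ))
      + Real.sqrt (τ/8) * Z * erf (x/r) * (Real.exp (x^2/(16*τ)) * (2*x/(16*τ)))
      = Z/8 * (1 + psi (x/r)) := by
    rw [hpsi, hsr, mul_add, mul_one, key, key2]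
  rw [heq] at h5
  exact h5

lemma gtilde_zero {τ Z : ℝ} : gtilde τ Z 0 = 0 := by
  simp [gtilde, erf_zero]

lemma gtilde_identity {τ Z : ℝ} (hτ0 : 0 < τ) (y : ℝ) :
    y * gtilde τ Z y = τ * Z * psi (y / Real.sqrt (8*τ)) := by
  set r := Real.sqrt (8*τ) with hr_def
  have hr0 : (0:ℝ) < r := hr_pos hτ0
  have hpsi : psi (y/r) = (y/r) * erf (y/r) * Real.exp (y^2/(16*τ)) := by
    unfold psi
    rw [hr_def, harg_eq hτ0]
  have hsr : Real.sqrt (τ/8) = τ / r := hsr_eq hτ0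
  rw [hpsi]
  unfold gtilde
  rw [← hr_def, hsr]
  field_simp

lemma psi_nonneg' (u : ℝ) : 0 ≤ psi u := by
  unfold psi
  rcases le_total 0 u with h | h
  · have := erf_nonneg_s6 h
    positivity
  · have h2 : erf u ≤ 0 := by
      have := erf_mono h
      rwa [erf_zero] at this
    have h3 : 0 ≤ u * erf u := by nlinarith
    exact mul_nonneg h3 (Real.exp_pos _).le

lemma gtilde_strictMono {τ Z : ℝ} (hτ0 : 0 < τ) (hZ : 0 < Z) :
    StrictMono (gtilde τ Z) := by
  apply strictMono_of_deriv_pos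
  intro x
  rw [(gtilde_hasDerivAt hτ0 x).deriv]
  have h1 := psi_nonneg' (x / Real.sqrt (8*τ))
  have h2 : (0:ℝ) < Z/8 := by linarith
  nlinarith

/-- g_{τ,Z}(x) = min(1, max(0, g̃_{τ,Z}(x))), the clamping of g̃ to [0,1]. -/
noncomputable def gfun (τ Z x : ℝ) : ℝ := min 1 (max 0 (gtilde τ Z x))

set_option maxHeartbeats 2000000 in
theorem stmt_6_aux (τ Z : ℝ) (hτ : 8 * Real.exp 1 ≤ τ)
    (hZ : 0 < Z) (hZ1 : Z ≤ 1 / Real.exp 1)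
    (hZτ : Real.log (1/Z) ≤ τ/16) :
    ∀ a b : ℝ, a ≤ b → b - a ≤ 2 →
      ∀ x ∈ Set.Icc a b, ∀ s ∈ Set.Icc a b, ∀ s' ∈ Set.Icc a b,
        4 * |gfun τ Z s - gfun τ Z s'| ≤
          ((1/τ) * x * gfun τ Z x + Z) * |s - s'| := by
  intro a b hab hba x hx s hs s' hs'
  obtain ⟨hax, hxb⟩ := hx
  obtain ⟨has, hsb⟩ := hs
  obtain ⟨has', hsb'⟩ := hs'
  have hexp1 : (2.7182818283:ℝ) < Real.exp 1 := Real.exp_one_gt_d9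
  have hτ0 : (0:ℝ) < τ := by nlinarith
  set r := Real.sqrt (8*τ) with hr_def
  have hr0 : (0:ℝ) < r := hr_pos hτ0
  have hrr : r * r = 8*τ := by have := hr_sq hτ0; nlinarith
  have hmono := gtilde_strictMono hτ0 hZ
  have hcont : Continuous (gtilde τ Z) :=
    continuous_iff_continuousAt.2 fun y => (gtilde_hasDerivAt hτ0 y).continuousAt
  -- gtilde τ Z τ ≥ 1
  have hT1 : 1 ≤ gtilde τ Z τ := by
    set T := Real.sqrt (τ/8) with hT_def
    have hT2 : T^2 = τ/8 := Real.sq_sqrt (by positivity)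
    have hT0 : 0 ≤ T := Real.sqrt_nonneg _
    have hehalf : Real.exp (1/2) * Real.exp (1/2) = Real.exp 1 := by
      rw [← Real.exp_add]; norm_num
    have hTe : Real.exp (1/2) ≤ T := by
      nlinarith [Real.exp_pos (1/2 : ℝ)]
    have herfT : Real.exp (-1/2) ≤ erf T := by
      have h1 : (1:ℝ) ≤ T := by nlinarith [Real.exp_pos (1/2 : ℝ)]
      exact le_trans erf_one_lb (erf_mono h1)
    have hZe : 1/Z ≤ Real.exp (τ/16) := by
      have := Real.exp_log (show (0:ℝ) < 1/Z by positivity)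
      calc 1/Z = Real.exp (Real.log (1/Z)) := this.symm
        _ ≤ Real.exp (τ/16) := Real.exp_le_exp.2 hZτ
    have h1 : 1 ≤ T * erf T := by
      have := mul_le_mul hTe herfT (Real.exp_pos _).le hT0
      have he : Real.exp (1/2) * Real.exp (-1/2) = 1 := by
        rw [← Real.exp_add]; norm_num
      linarith [he ▸ this]
    have h2 : 1 ≤ Z * Real.exp (τ/16) := by
      have := mul_le_mul_of_nonneg_left hZe hZ.le
      have he : Z * (1/Z) = 1 := by field_simp
      linarith [he ▸ this]
    have harg : τ^2/(16*τ) = τ/16 := by field_simp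
    have hτr : τ / r = T := (hsr_eq hτ0).symm
    have hgt : gtilde τ Z τ = (T * erf T) * (Z * Real.exp (τ/16)) := by
      unfold gtilde
      rw [← hr_def, hτr, harg, ← hT_def]
      ring
    rw [hgt]
    nlinarith [erf_nonneg_s6 (le_trans (by positivity) hTe), Real.exp_pos (τ/16)]
  -- existence of U
  obtain ⟨U, hUmem, hgU⟩ : ∃ U ∈ Set.Icc (0:ℝ) τ, gtilde τ Z U = 1 := by
    have hIVT := intermediate_value_Icc hτ0.le hcont.continuousOn
    have h1 : (1:ℝ) ∈ Set.Icc (gtilde τ Z 0) (gtilde τ Z τ) := by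
      rw [gtilde_zero]; exact ⟨zero_le_one, hT1⟩
    obtain ⟨U, hU, hgU⟩ := hIVT h1
    exact ⟨U, hU, hgU⟩
  have hU0 : 0 ≤ U := hUmem.1
  have hUτ : U ≤ τ := hUmem.2
  -- clamp representation
  have hclamp : ∀ u : ℝ, gfun τ Z u = gtilde τ Z (min U (max 0 u)) := by
    intro u
    rcases le_total u 0 with h | h
    · rw [max_eq_left h, min_eq_right hU0, gtilde_zero]
      unfold gfun
      have h2 : gtilde τ Z u ≤ 0 := by
        have := hmono.monotone h; rwa [gtilde_zero] at this
      rw [max_eq_left h2, min_eq_right zero_le_one]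
    · rcases le_total u U with h2 | h2
      · rw [max_eq_right h, min_eq_right h2]
        unfold gfun
        have hg0 : 0 ≤ gtilde τ Z u := by
          have := hmono.monotone h; rwa [gtilde_zero] at this
        have hg1 : gtilde τ Z u ≤ 1 := by
          have := hmono.monotone h2; rwa [hgU] at this
        rw [max_eq_right hg0, min_eq_right hg1]
      · rw [max_eq_right h, min_eq_left h2, hgU]
        unfold gfun
        have hg1 : 1 ≤ gtilde τ Z u := by
          have := hmono.monotone h2; rwa [hgU] at this
        rw [max_eq_right (le_trans zero_le_one hg1), min_eq_left hg1]
  -- nonnegativity of x * gfun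
  have hgfun_nonneg : ∀ u : ℝ, 0 ≤ gfun τ Z u := by
    intro u
    unfold gfun
    exact le_min zero_le_one (le_max_left _ _)
  have hxg : 0 ≤ x * gfun τ Z x := by
    rcases le_total x 0 with h | h
    · have : gfun τ Z x = 0 := by
        unfold gfun
        have h2 : gtilde τ Z x ≤ 0 := by
          have := hmono.monotone h; rwa [gtilde_zero] at this
        rw [max_eq_left h2, min_eq_right zero_le_one]
      rw [this, mul_zero]
    · exact mul_nonneg h (hgfun_nonneg x)
  set p := min U (max 0 s) with hp_def
  set q := min U (max 0 s') with hq_def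
  set m := min p q with hm_def
  set M := max p q with hM_def
  have hp0 : 0 ≤ p := le_min hU0 (le_max_left _ _)
  have hq0 : 0 ≤ q := le_min hU0 (le_max_left _ _)
  have hpU : p ≤ U := min_le_left _ _
  have hqU : q ≤ U := min_le_left _ _
  have hm0 : 0 ≤ m := le_min hp0 hq0
  have hMU : M ≤ U := max_le hpU hqU
  have hMb : M ≤ max 0 b := by
    apply max_le
    · exact le_trans (min_le_right _ _) (max_le_max le_rfl hsb)
    · exact le_trans (min_le_right _ _) (max_le_max le_rfl hsb')
  -- delta bounds
  have hr13 : (13.16:ℝ) ≤ r := by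
    rw [hr_def]
    rw [Real.le_sqrt (by norm_num) (by positivity)]
    nlinarith [hexp1, hτ]
  have hδ0 : (0:ℝ) < 2/r := by positivity
  have hδ152 : 2/r ≤ 0.152 := by
    rw [div_le_iff₀ hr0]; nlinarith
  set L := ((1/τ) * x * gfun τ Z x + Z)/4 with hL_def
  have hL0 : 0 ≤ L := by
    rw [hL_def]
    have : 0 ≤ (1/τ) * x * gfun τ Z x := by
      rw [mul_assoc]
      exact mul_nonneg (by positivity) hxg
    linarith
  -- derivative bound
  have hbound : ∀ t ∈ Set.Icc m M, ‖Z/8 * (1 + psi (t/r))‖ ≤ L := by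
    intro t ht
    have ht0 : 0 ≤ t := le_trans hm0 ht.1
    have htU : t ≤ U := le_trans ht.2 hMU
    have htb : t ≤ max 0 b := le_trans ht.2 hMb
    have hu4 : (2/r) * (t/r) ≤ 1/4 := by
      rw [div_mul_div_comm]
      rw [div_le_iff₀ (by positivity)]
      nlinarith
    have hur0 : 0 ≤ t/r := by positivity
    have hψ : psi (t/r) ≤ 2 * (x * gfun τ Z x) / (τ * Z) + 1 := by
      rcases le_total x 0 with hx0 | hx0
      · have ht2 : t ≤ 2 := by
          have hb2 : b ≤ 2 := by linarith
          have : max 0 b ≤ 2 := max_le (by norm_num) hb2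
          linarith
        have hkey := psi_key hδ0 hδ152 hur0 le_rfl
          (by rw [zero_add, div_le_div_iff_of_pos_right hr0]; exact ht2) hu4
        rw [psi_zero] at hkey
        have hrhs : 0 ≤ 2 * (x * gfun τ Z x) / (τ * Z) := by positivity
        linarith
      · rcases le_total (gtilde τ Z x) 1 with hgx | hgx
        · have hgeq : gfun τ Z x = gtilde τ Z x := by
            unfold gfun
            have hg0 : 0 ≤ gtilde τ Z x := by
              have := hmono.monotone hx0; rwa [gtilde_zero] at this
            rw [max_eq_right hg0, min_eq_right hgx]
          have hid := gtilde_identity hτ0 (Z := Z) x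
          have hxr0 : 0 ≤ x/r := by positivity
          have htx : t ≤ x + 2 := by
            have hb2 : b ≤ x + 2 := by linarith
            have : max 0 b ≤ x + 2 := max_le (by linarith) hb2
            linarith
          have hkey := psi_key hδ0 hδ152 hur0 hxr0
            (by rw [← add_div, div_le_div_iff_of_pos_right hr0]; exact htx) hu4
        -- 2 * psi (x/r) + 1 = 2 * (x * gfun)/(τZ) + 1
          rw [← hr_def] at hid
          have heq2 : psi (x/r) = (x * gfun τ Z x) / (τ * Z) := by
            rw [hgeq, hid]
            exact (mul_div_cancel_left₀ _ (by positivity)).symm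
          rw [heq2] at hkey
          calc psi (t/r) ≤ 2 * ((x * gfun τ Z x) / (τ * Z)) + 1 := hkey
            _ = 2 * (x * gfun τ Z x) / (τ * Z) + 1 := by ring
        · have hgx1 : gfun τ Z x = 1 := by
            unfold gfun
            rw [max_eq_right (le_trans zero_le_one hgx), min_eq_left hgx]
          have hUx : U ≤ x := by
            by_contra hcon
            push_neg at hcon
            have := hmono hcon
            rw [hgU] at this
            linarith
          have hψU : psi (U/r) = U / (τ * Z) := by
            have hid := gtilde_identity hτ0 (Z := Z) U
            rw [← hr_def, hgU, mul_one] at hid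
            rw [eq_div_iff (by positivity : (τ*Z) ≠ 0)]
            linear_combination -hid
          have h1 : psi (t/r) ≤ psi (U/r) :=
            psi_mono hur0 (by rw [div_le_div_iff_of_pos_right hr0]; exact htU)
          rw [hψU] at h1
          have h2 : U / (τ * Z) ≤ x / (τ * Z) :=
            (div_le_div_iff_of_pos_right (by positivity)).2 hUx
          have hx0' : 0 ≤ x := le_trans hU0 hUx
          have h3 : 0 ≤ x / (τ * Z) := by positivity
          have h4 : x / (τ * Z) = x * gfun τ Z x / (τ * Z) := by rw [hgx1, mul_one]
          rw [h4] at h2 h3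
          calc psi (t/r) ≤ x * gfun τ Z x / (τ * Z) := le_trans h1 h2
            _ ≤ 2 * (x * gfun τ Z x) / (τ * Z) + 1 := by
                rw [show 2 * (x * gfun τ Z x) / (τ * Z)
                  = 2 * (x * gfun τ Z x / (τ * Z)) by ring]
                linarith
    have hψ0 := psi_nonneg' (t/r)
    have habs : ‖Z/8 * (1 + psi (t/r))‖ = Z/8 * (1 + psi (t/r)) := by
      rw [Real.norm_eq_abs, abs_of_nonneg (by nlinarith)]
    rw [habs]
    have hstep : Z/8 * (1 + psi (t/r)) ≤ Z/8 * (1 + (2 * (x * gfun τ Z x) / (τ * Z) + 1)) := by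
      apply mul_le_mul_of_nonneg_left (by linarith) (by linarith)
    have heqL : Z/8 * (1 + (2 * (x * gfun τ Z x) / (τ * Z) + 1)) = L := by
      rw [hL_def]
      field_simp
      ring
    linarith [heqL ▸ hstep]
  -- mean value theorem
  have hmvt : ‖gtilde τ Z q - gtilde τ Z p‖ ≤ L * ‖q - p‖ := by
    apply Convex.norm_image_sub_le_of_norm_hasDerivWithin_le
      (f' := fun t => Z/8 * (1 + psi (t/r)))
      (fun t _ => (gtilde_hasDerivAt hτ0 t).hasDerivWithinAt)
      hbound (convex_Icc m M)
      ⟨min_le_left _ _, le_max_left _ _⟩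
      ⟨min_le_right _ _, le_max_right _ _⟩
  have hpq : |p - q| ≤ |s - s'| := by
    have h1 : |p - q| ≤ max |U - U| |max 0 s - max 0 s'| :=
      abs_min_sub_min_le_max U (max 0 s) U (max 0 s')
    have h2 : |max 0 s - max 0 s'| ≤ |s - s'| := by
      rw [max_comm 0 s, max_comm 0 s']
      exact abs_max_sub_max_le_abs s s' 0
    rw [sub_self, abs_zero, max_eq_right (abs_nonneg (max 0 s - max 0 s'))] at h1
    linarith
  have hfinal : |gfun τ Z s - gfun τ Z s'| ≤ L * |s - s'| := by
    rw [hclamp s, hclamp s', ← hp_def, ← hq_def]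
    have h1 : |gtilde τ Z p - gtilde τ Z q| ≤ L * |p - q| := by
      have := hmvt
      rw [Real.norm_eq_abs, Real.norm_eq_abs, abs_sub_comm, abs_sub_comm q p] at this
      exact this
    calc |gtilde τ Z p - gtilde τ Z q| ≤ L * |p - q| := h1
      _ ≤ L * |s - s'| := mul_le_mul_of_nonneg_left hpq hL0
  calc 4 * |gfun τ Z s - gfun τ Z s'| ≤ 4 * (L * |s - s'|) := by linarith
    _ = ((1/τ) * x * gfun τ Z x + Z) * |s - s'| := by rw [hL_def]; ring

theorem stmt_6 (τ Z : ℝ) (hτ : 8 * Real.exp 1 ≤ τ)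
    (hZ : 0 < Z) (hZ1 : Z ≤ 1 / Real.exp 1)
    (hZτ : Real.log (1/Z) ≤ τ/16) :
    ∀ a b : ℝ, a ≤ b → b - a ≤ 2 →
      ∀ x ∈ Set.Icc a b, ∀ s ∈ Set.Icc a b, ∀ s' ∈ Set.Icc a b,
        4 * |gfun τ Z s - gfun τ Z s'| ≤
          ((1/τ) * x * gfun τ Z x + Z) * |s - s'| := by
  exact stmt_6_aux τ Z hτ hZ hZ1 hZτ
end
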